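/- arXiv:math/0211237 — 5 statements merged into one kernel-verified Lean document; each statement's English description precedes it below -/
import Mathlib

section
/- In any orthomodular lattice, with x +_l y := (x ∨ (x' ∧ y)) ∧ (x' ∨ y'), x +_r y := ((x ∧ y') ∨ y) ∧ (x' ∨ y'), x +_{l'} y := (x ∨ y) ∧ (x' ∨ (x ∧ y')), and x +_{r'} y := (x ∨ y) ∧ ((x' ∧ y) ∨ y'), the identities x +_l y = y +_r x, x +_l y = x' +_{l'} y', and x +_l y = y' +_{r'} x' hold. -/
/-- An orthomodular lattice: a bounded lattice with an orthocomplementation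
satisfying the orthomodular law. -/
class OML (α : Type*) extends Lattice α, BoundedOrder α, Compl α where
  inf_compl : ∀ x : α, x ⊓ xᶜ = ⊥
  sup_compl : ∀ x : α, x ⊔ xᶜ = ⊤
  compl_compl : ∀ x : α, xᶜᶜ = x
  compl_antitone : ∀ x y : α, x ≤ y → yᶜ ≤ xᶜ
  orthomodular : ∀ x y : α, x ≤ y → y = x ⊔ (y ⊓ xᶜ)

def pl {α : Type*} [OML α] (x y : α) : α := (x ⊔ (xᶜ ⊓ y)) ⊓ (xᶜ ⊔ yᶜ)
def pr {α : Type*} [OML α] (x y : α) : α := ((x ⊓ yᶜ) ⊔ y) ⊓ (xᶜ ⊔ yᶜ)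
def pl' {α : Type*} [OML α] (x y : α) : α := (x ⊔ y) ⊓ (xᶜ ⊔ (x ⊓ yᶜ))
def pr' {α : Type*} [OML α] (x y : α) : α := (x ⊔ y) ⊓ ((xᶜ ⊓ y) ⊔ yᶜ)

theorem stmt_4 {α : Type*} [OML α] (x y : α) :
    pl x y = pr y x ∧ pl x y = pl' xᶜ yᶜ ∧ pl x y = pr' yᶜ xᶜ := by
  refine ⟨?_, ?_, ?_⟩ <;>
    simp only [pl, pr, pl', pr', OML.compl_compl] <;>
    ac_rfl
end

section
/- In any orthomodular lattice, with x +_l y := (x ∨ (x' ∧ y)) ∧ (x' ∨ y'), the identity (x +_l y)' = x' +_l y holds. -/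
section Aux

variable {α : Type*} [OML α]

lemma oml_le_of_compl_le {a b : α} (h : bᶜ ≤ aᶜ) : a ≤ b := by
  have := OML.compl_antitone _ _ h
  rwa [OML.compl_compl, OML.compl_compl] at this

lemma oml_demorgan_sup (a b : α) : (a ⊔ b)ᶜ = aᶜ ⊓ bᶜ := by
  apply le_antisymm
  · exact le_inf (OML.compl_antitone _ _ le_sup_left)
      (OML.compl_antitone _ _ le_sup_right)
  · apply oml_le_of_compl_le
    rw [OML.compl_compl]
    apply sup_le
    · apply oml_le_of_compl_le
      rw [OML.compl_compl]; exact inf_le_left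
    · apply oml_le_of_compl_le
      rw [OML.compl_compl]; exact inf_le_right

lemma oml_demorgan_inf (a b : α) : (a ⊓ b)ᶜ = aᶜ ⊔ bᶜ := by
  have := oml_demorgan_sup aᶜ bᶜ
  rw [OML.compl_compl, OML.compl_compl] at this
  rw [← this, OML.compl_compl]

/-- In an OML: if `z ≤ c` then `c ⊓ (cᶜ ⊔ z) = z`. -/
lemma oml_key {c z : α} (h : z ≤ c) : c ⊓ (cᶜ ⊔ z) = z := by
  have h' : cᶜ ≤ zᶜ := OML.compl_antitone _ _ h
  have h2 := OML.orthomodular _ _ h'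
  have h3 : z = (cᶜ ⊔ (zᶜ ⊓ cᶜᶜ))ᶜ := by rw [← h2, OML.compl_compl]
  simp only [oml_demorgan_sup, oml_demorgan_inf, OML.compl_compl] at h3
  conv_rhs => rw [h3]
  rw [sup_comm z cᶜ]

end Aux

theorem stmt_5 {α : Type*} [OML α] (x y : α) : (pl x y)ᶜ = pl xᶜ y := by
  unfold pl
  simp only [oml_demorgan_inf, oml_demorgan_sup, OML.compl_compl]
  -- goal: (xᶜ ⊓ (x ⊔ yᶜ)) ⊔ (x ⊓ y) = (xᶜ ⊔ (x ⊓ y)) ⊓ (x ⊔ yᶜ)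
  set c := x ⊔ yᶜ with hc
  have hcc : cᶜ = xᶜ ⊓ y := by
    rw [hc, oml_demorgan_sup, OML.compl_compl]
  have h1 : cᶜ ≤ xᶜ := by rw [hcc]; exact inf_le_left
  have h2 : xᶜ = cᶜ ⊔ (xᶜ ⊓ c) := by
    have := OML.orthomodular cᶜ xᶜ h1
    rwa [OML.compl_compl] at this
  have hz : (xᶜ ⊓ c) ⊔ (x ⊓ y) ≤ c := by
    apply sup_le inf_le_right
    exact le_trans inf_le_left le_sup_left
  calc (xᶜ ⊓ c) ⊔ (x ⊓ y) = c ⊓ (cᶜ ⊔ ((xᶜ ⊓ c) ⊔ (x ⊓ y))) := (oml_key hz).symm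
    _ = (xᶜ ⊔ (x ⊓ y)) ⊓ c := by rw [← sup_assoc, ← h2, inf_comm]
end

section
/- In an orthomodular lattice, if the two symmetric differences ▽ and △ coincide for elements a and b, i.e., (a ∧ b') ∨ (a' ∧ b) = (a ∨ b) ∧ (a' ∨ b'), then a commutes with b. Consequently, if ▽ = △ holds on all of L, then L is a Boolean algebra. -/
namespace OMLAux

variable {α : Type*} [OML α]

lemma compl_sup (x y : α) : (x ⊔ y)ᶜ = xᶜ ⊓ yᶜ := by
  apply le_antisymm
  · exact le_inf (OML.compl_antitone x (x ⊔ y) le_sup_left)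
      (OML.compl_antitone y (x ⊔ y) le_sup_right)
  · have h1 : xᶜ ⊓ yᶜ ≤ xᶜ := inf_le_left
    have h2 : xᶜ ⊓ yᶜ ≤ yᶜ := inf_le_right
    have hx : x ≤ (xᶜ ⊓ yᶜ)ᶜ := by
      have := OML.compl_antitone _ _ h1
      rwa [OML.compl_compl] at this
    have hy : y ≤ (xᶜ ⊓ yᶜ)ᶜ := by
      have := OML.compl_antitone _ _ h2
      rwa [OML.compl_compl] at this
    have := OML.compl_antitone _ _ (sup_le hx hy)
    rwa [OML.compl_compl] at this

lemma compl_inf (x y : α) : (x ⊓ y)ᶜ = xᶜ ⊔ yᶜ := by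
  have := compl_sup (xᶜ) (yᶜ)
  rw [OML.compl_compl, OML.compl_compl] at this
  rw [← this, OML.compl_compl]

lemma key (a b : α)
    (h : (a ⊓ bᶜ) ⊔ (aᶜ ⊓ b) = (a ⊔ b) ⊓ (aᶜ ⊔ bᶜ)) :
    a = (a ⊓ b) ⊔ (a ⊓ bᶜ) := by
  set c := (a ⊓ b) ⊔ (a ⊓ bᶜ) with hc
  have hca : c ≤ a := sup_le inf_le_left inf_le_left
  have hom := OML.orthomodular c a hca
  have hbot : a ⊓ cᶜ = ⊥ := by
    set d := (a ⊓ bᶜ) ⊔ (aᶜ ⊓ b) with hd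
    have h1 : a ⊓ cᶜ ≤ d := by
      rw [h]
      refine le_inf (le_trans inf_le_left le_sup_left) ?_
      have : cᶜ ≤ (a ⊓ b)ᶜ := OML.compl_antitone _ _ le_sup_left
      rw [compl_inf] at this
      exact le_trans inf_le_right this
    have h2 : a ⊓ cᶜ ≤ dᶜ := by
      rw [hd, compl_sup (a ⊓ bᶜ) (aᶜ ⊓ b)]
      refine le_inf ?_ ?_
      · have : cᶜ ≤ (a ⊓ bᶜ)ᶜ := OML.compl_antitone _ _ le_sup_right
        exact le_trans inf_le_right this
      · have ha : a ≤ (aᶜ ⊓ b)ᶜ := by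
          have := OML.compl_antitone _ _ (inf_le_left : aᶜ ⊓ b ≤ aᶜ)
          rwa [OML.compl_compl] at this
        exact le_trans inf_le_left ha
    have := le_inf h1 h2
    rw [OML.inf_compl] at this
    exact le_bot_iff.mp this
  rw [hom, hbot, sup_bot_eq]

end OMLAux

theorem stmt_9 {α : Type*} [OML α] :
    (∀ a b : α, (a ⊓ bᶜ) ⊔ (aᶜ ⊓ b) = (a ⊔ b) ⊓ (aᶜ ⊔ bᶜ) →
      a = (a ⊓ b) ⊔ (a ⊓ bᶜ)) ∧
    ((∀ a b : α, (a ⊓ bᶜ) ⊔ (aᶜ ⊓ b) = (a ⊔ b) ⊓ (aᶜ ⊔ bᶜ)) →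
      ∀ a b : α, a = (a ⊓ b) ⊔ (a ⊓ bᶜ)) := by
  exact ⟨fun a b h => OMLAux.key a b h, fun H a b => OMLAux.key a b (H a b)⟩
end

section
/- If the operation x +_l y := (x ∨ (x' ∧ y)) ∧ (x' ∨ y') is commutative on an orthomodular lattice L, then L is a Boolean algebra (i.e., every two elements of L commute). -/
section OMLlemmas
variable {α : Type*} [OML α]

private lemma omlcc (x : α) : xᶜᶜ = x := OML.compl_compl x

private lemma omlmono {x y : α} (h : x ≤ y) : yᶜ ≤ xᶜ := OML.compl_antitone x y h

private lemma omlcinf (x y : α) : (x ⊓ y)ᶜ = xᶜ ⊔ yᶜ := by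
  apply le_antisymm
  · have h1 : (xᶜ ⊔ yᶜ)ᶜ ≤ x := by
      have := omlmono (le_sup_left : xᶜ ≤ xᶜ ⊔ yᶜ); rwa [omlcc] at this
    have h2 : (xᶜ ⊔ yᶜ)ᶜ ≤ y := by
      have := omlmono (le_sup_right : yᶜ ≤ xᶜ ⊔ yᶜ); rwa [omlcc] at this
    have := omlmono (le_inf h1 h2)
    rwa [omlcc] at this
  · exact sup_le (omlmono inf_le_left) (omlmono inf_le_right)

private lemma omlcsup (x y : α) : (x ⊔ y)ᶜ = xᶜ ⊓ yᶜ := by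
  have h := omlcinf xᶜ yᶜ
  rw [omlcc, omlcc] at h
  rw [← h, omlcc]

private lemma omlom {x y : α} (h : x ≤ y) : y = x ⊔ (y ⊓ xᶜ) := OML.orthomodular x y h

/-- Key OML identity: if `c ≤ x` then `x ⊓ (xᶜ ⊔ c) = c`. -/
private lemma omlstep4 {c x : α} (h : c ≤ x) : x ⊓ (xᶜ ⊔ c) = c := by
  have h1 : xᶜ ≤ cᶜ := omlmono h
  have h2 : cᶜ = xᶜ ⊔ (cᶜ ⊓ xᶜᶜ) := omlom h1
  rw [omlcc] at h2
  have h3 := congrArg (·ᶜ) h2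
  rw [omlcc, omlcsup, omlcinf, omlcc, omlcc] at h3
  -- h3 : c = x ⊓ (c ⊔ xᶜ)
  rw [sup_comm]
  exact h3.symm

/-- Commutation relation in an OML. -/
private def Cm (a b : α) : Prop := a = (a ⊓ b) ⊔ (a ⊓ bᶜ)

private lemma Cm.compl {a b : α} (h : Cm a b) : Cm a bᶜ := by
  unfold Cm at h ⊢
  rw [omlcc, sup_comm]
  exact h

private lemma Cm.symm {a b : α} (h : Cm a b) : Cm b a := by
  have h1 : a ⊔ bᶜ = bᶜ ⊔ (a ⊓ b) := by
    conv_lhs => rw [h]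
    rw [sup_assoc, sup_eq_right.mpr (inf_le_right : a ⊓ bᶜ ≤ bᶜ), sup_comm]
  have h2 : b ⊓ (a ⊔ bᶜ) = a ⊓ b := by
    rw [h1]
    exact omlstep4 (inf_le_right : a ⊓ b ≤ b)
  have h3 : b = (aᶜ ⊓ b) ⊔ (b ⊓ (aᶜ ⊓ b)ᶜ) := omlom (inf_le_right : aᶜ ⊓ b ≤ b)
  rw [omlcinf, omlcc, h2] at h3
  -- h3 : b = (aᶜ ⊓ b) ⊔ (a ⊓ b)
  unfold Cm
  rw [inf_comm b a, inf_comm b aᶜ, sup_comm]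
  exact h3

private lemma Cm.sup_meet {x y z : α} (hx : Cm x z) (hy : Cm y z) :
    (x ⊔ y) ⊓ z = (x ⊓ z) ⊔ (y ⊓ z) := by
  have hd : (x ⊓ z) ⊔ (y ⊓ z) ≤ z := sup_le inf_le_right inf_le_right
  apply le_antisymm
  · have hx' : x ≤ ((x ⊓ z) ⊔ (y ⊓ z)) ⊔ zᶜ := by
      conv_lhs => rw [hx]
      exact sup_le (le_sup_of_le_left le_sup_left) (le_sup_of_le_right inf_le_right)
    have hy' : y ≤ ((x ⊓ z) ⊔ (y ⊓ z)) ⊔ zᶜ := by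
      conv_lhs => rw [hy]
      exact sup_le (le_sup_of_le_left le_sup_right) (le_sup_of_le_right inf_le_right)
    have h1 : (x ⊔ y) ⊓ z ≤ (((x ⊓ z) ⊔ (y ⊓ z)) ⊔ zᶜ) ⊓ z :=
      inf_le_inf_right z (sup_le hx' hy')
    have h2 : (((x ⊓ z) ⊔ (y ⊓ z)) ⊔ zᶜ) ⊓ z = (x ⊓ z) ⊔ (y ⊓ z) := by
      rw [inf_comm, sup_comm]
      exact omlstep4 hd
    rwa [h2] at h1
  · exact sup_le (inf_le_inf_right z le_sup_left) (inf_le_inf_right z le_sup_right)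

private lemma Cm.sup {x y z : α} (hx : Cm x z) (hy : Cm y z) : Cm (x ⊔ y) z := by
  have h1 := Cm.sup_meet hx hy
  have h2 := Cm.sup_meet hx.compl hy.compl
  unfold Cm
  rw [h1, h2]
  conv_lhs => rw [hx, hy]
  rw [sup_sup_sup_comm]

private lemma Cm.inf {x y z : α} (hx : Cm x z) (hy : Cm y z) : Cm (x ⊓ y) z := by
  have h1 : Cm xᶜ z := hx.symm.compl.symm
  have h2 : Cm yᶜ z := hy.symm.compl.symm
  have h3 : Cm (xᶜ ⊔ yᶜ) z := h1.sup h2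
  have h4 : Cm (x ⊓ y)ᶜ z := by rw [omlcinf]; exact h3
  have h5 : Cm z ((x ⊓ y)ᶜ)ᶜ := h4.symm.compl
  rw [omlcc] at h5
  exact h5.symm

end OMLlemmas

theorem stmt_10 {α : Type*} [OML α] (h : ∀ x y : α, pl x y = pl y x) :
    ∀ a b : α, a = (a ⊓ b) ⊔ (a ⊓ bᶜ) := by
  intro a b
  -- Step A : a = (a ⊓ bᶜ) ⊔ (a ⊓ (aᶜ ⊔ b))
  have hA : a = (a ⊓ bᶜ) ⊔ (a ⊓ (aᶜ ⊔ b)) := by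
    have := omlom (inf_le_left : a ⊓ bᶜ ≤ a)
    rwa [omlcinf, omlcc] at this
  -- Step B : a ⊓ (aᶜ ⊔ b) = (a ⊓ b) ⊔ s, where s = a ⊓ (aᶜ ⊔ b) ⊓ (aᶜ ⊔ bᶜ)
  have hab_le_t : a ⊓ b ≤ a ⊓ (aᶜ ⊔ b) :=
    le_inf inf_le_left (le_sup_of_le_right inf_le_right)
  have hB : a ⊓ (aᶜ ⊔ b) = (a ⊓ b) ⊔ (a ⊓ (aᶜ ⊔ b) ⊓ (aᶜ ⊔ bᶜ)) := by
    have := omlom hab_le_t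
    rwa [omlcinf] at this
  -- Step C : s ≤ bᶜ ⊔ (a ⊓ b), using h a bᶜ
  have hC : a ⊓ (aᶜ ⊔ b) ⊓ (aᶜ ⊔ bᶜ) ≤ bᶜ ⊔ (a ⊓ b) := by
    have ht_le : a ⊓ (aᶜ ⊔ b) ≤ pl a bᶜ := by
      unfold pl
      rw [omlcc]
      exact le_inf (inf_le_left.trans le_sup_left) inf_le_right
    have hpl : pl bᶜ a ≤ bᶜ ⊔ (a ⊓ b) := by
      unfold pl
      rw [omlcc]
      exact inf_le_left.trans (le_of_eq (by rw [inf_comm]))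
    calc a ⊓ (aᶜ ⊔ b) ⊓ (aᶜ ⊔ bᶜ) ≤ a ⊓ (aᶜ ⊔ b) := inf_le_left
      _ ≤ pl a bᶜ := ht_le
      _ = pl bᶜ a := h a bᶜ
      _ ≤ bᶜ ⊔ (a ⊓ b) := hpl
  -- Step D : s ≤ b ⊔ (a ⊓ bᶜ), using h a b
  have hD : a ⊓ (aᶜ ⊔ b) ⊓ (aᶜ ⊔ bᶜ) ≤ b ⊔ (a ⊓ bᶜ) := by
    have hs_le : a ⊓ (aᶜ ⊔ b) ⊓ (aᶜ ⊔ bᶜ) ≤ pl a b := by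
      unfold pl
      exact le_inf (le_sup_of_le_left (inf_le_left.trans inf_le_left)) inf_le_right
    have hpl : pl b a ≤ b ⊔ (a ⊓ bᶜ) := by
      unfold pl
      exact inf_le_left.trans (le_of_eq (by rw [inf_comm]))
    calc a ⊓ (aᶜ ⊔ b) ⊓ (aᶜ ⊔ bᶜ) ≤ pl a b := hs_le
      _ = pl b a := h a b
      _ ≤ b ⊔ (a ⊓ bᶜ) := hpl
  -- w = bᶜ ⊔ (a ⊓ b) and w₂ = b ⊔ (a ⊓ bᶜ) both commute with b
  have hwb : (bᶜ ⊔ (a ⊓ b)) ⊓ b = a ⊓ b := by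
    rw [inf_comm]
    exact omlstep4 (inf_le_right : a ⊓ b ≤ b)
  have hw2b : (b ⊔ (a ⊓ bᶜ)) ⊓ bᶜ = a ⊓ bᶜ := by
    rw [inf_comm]
    have := omlstep4 (inf_le_right : a ⊓ bᶜ ≤ bᶜ)
    rwa [omlcc] at this
  have hCwb : Cm (bᶜ ⊔ (a ⊓ b)) b := by
    unfold Cm
    rw [hwb, inf_eq_right.mpr (le_sup_left : bᶜ ≤ bᶜ ⊔ (a ⊓ b)), sup_comm]
  have hCw2b : Cm (b ⊔ (a ⊓ bᶜ)) b := by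
    unfold Cm
    rw [hw2b, inf_eq_right.mpr (le_sup_left : b ≤ b ⊔ (a ⊓ bᶜ))]
  have hm : Cm ((bᶜ ⊔ (a ⊓ b)) ⊓ (b ⊔ (a ⊓ bᶜ))) b := hCwb.inf hCw2b
  -- hence w ⊓ w₂ = (a ⊓ b) ⊔ (a ⊓ bᶜ)
  have hk : (bᶜ ⊔ (a ⊓ b)) ⊓ (b ⊔ (a ⊓ bᶜ)) = (a ⊓ b) ⊔ (a ⊓ bᶜ) := by
    unfold Cm at hm
    have e1 : (bᶜ ⊔ (a ⊓ b)) ⊓ (b ⊔ (a ⊓ bᶜ)) ⊓ b = a ⊓ b := by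
      rw [inf_assoc, inf_eq_right.mpr (le_sup_left : b ≤ b ⊔ (a ⊓ bᶜ)), hwb]
    have e2 : (bᶜ ⊔ (a ⊓ b)) ⊓ (b ⊔ (a ⊓ bᶜ)) ⊓ bᶜ = a ⊓ bᶜ := by
      rw [inf_right_comm, inf_eq_right.mpr (le_sup_left : bᶜ ≤ bᶜ ⊔ (a ⊓ b)),
        inf_comm, hw2b]
    rw [e1, e2] at hm
    exact hm
  -- s ≤ (a ⊓ b) ⊔ (a ⊓ bᶜ)
  have hsk : a ⊓ (aᶜ ⊔ b) ⊓ (aᶜ ⊔ bᶜ) ≤ (a ⊓ b) ⊔ (a ⊓ bᶜ) := by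
    rw [← hk]
    exact le_inf hC hD
  -- assemble
  calc a = (a ⊓ bᶜ) ⊔ (a ⊓ (aᶜ ⊔ b)) := hA
    _ = (a ⊓ bᶜ) ⊔ ((a ⊓ b) ⊔ (a ⊓ (aᶜ ⊔ b) ⊓ (aᶜ ⊔ bᶜ))) := by rw [← hB]
    _ = ((a ⊓ b) ⊔ (a ⊓ bᶜ)) ⊔ (a ⊓ (aᶜ ⊔ b) ⊓ (aᶜ ⊔ bᶜ)) := by
        rw [← sup_assoc, sup_comm (a ⊓ bᶜ) (a ⊓ b)]
    _ = (a ⊓ b) ⊔ (a ⊓ bᶜ) := sup_eq_left.mpr hsk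
end

section
/- Every orthomodular lattice satisfies the identity (x +_l y) +_l y = x, where x +_l y := (x ∨ (x' ∧ y)) ∧ (x' ∨ y'). -/
namespace OMLaux

variable {α : Type*} [OML α]

lemma cc (x : α) : xᶜᶜ = x := OML.compl_compl x

lemma anti {x y : α} (h : x ≤ y) : yᶜ ≤ xᶜ := OML.compl_antitone x y h

lemma le_compl_of {x y : α} (h : x ≤ yᶜ) : y ≤ xᶜ := by
  have := anti h; rwa [cc] at this

lemma om {x y : α} (h : x ≤ y) : y = x ⊔ (y ⊓ xᶜ) := OML.orthomodular x y h

lemma compl_sup (x y : α) : (x ⊔ y)ᶜ = xᶜ ⊓ yᶜ := by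
  apply le_antisymm
  · exact le_inf (anti le_sup_left) (anti le_sup_right)
  · have h1 : x ≤ (xᶜ ⊓ yᶜ)ᶜ := le_compl_of inf_le_left
    have h2 : y ≤ (xᶜ ⊓ yᶜ)ᶜ := le_compl_of inf_le_right
    have := anti (sup_le h1 h2); rwa [cc] at this

lemma compl_inf (x y : α) : (x ⊓ y)ᶜ = xᶜ ⊔ yᶜ := by
  have h := compl_sup xᶜ yᶜ
  rw [cc, cc] at h
  rw [← h, cc]

/-- If `m ≤ xᶜ` then `(x ⊔ m) ⊓ xᶜ = m`. -/
lemma key1 (x m : α) (h : m ≤ xᶜ) : (x ⊔ m) ⊓ xᶜ = m := by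
  have hm : m ≤ (x ⊔ m) ⊓ xᶜ := le_inf le_sup_right h
  have hom := om hm
  have hz : ((x ⊔ m) ⊓ xᶜ) ⊓ mᶜ = ⊥ := by
    apply le_antisymm _ bot_le
    have h1 : ((x ⊔ m) ⊓ xᶜ) ⊓ mᶜ ≤ (x ⊔ m) ⊓ (x ⊔ m)ᶜ := by
      rw [compl_sup]
      exact le_inf (le_trans inf_le_left inf_le_left)
        (le_inf (le_trans inf_le_left inf_le_right) inf_le_right)
    rw [OML.inf_compl] at h1
    exact h1
  rw [hz, sup_bot_eq] at hom
  exact hom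

/-- If `m ≤ xᶜ` then `(x ⊔ m) ⊓ mᶜ = x`. -/
lemma key2 (x m : α) (h : m ≤ xᶜ) : (x ⊔ m) ⊓ mᶜ = x := by
  have hx : x ≤ mᶜ := le_compl_of h
  have hxw : x ≤ (x ⊔ m) ⊓ mᶜ := le_inf le_sup_left hx
  have hom := om hxw
  have hz : ((x ⊔ m) ⊓ mᶜ) ⊓ xᶜ = ⊥ := by
    apply le_antisymm _ bot_le
    have h1 : ((x ⊔ m) ⊓ mᶜ) ⊓ xᶜ ≤ m ⊓ mᶜ := by
      refine le_inf ?_ (le_trans inf_le_left inf_le_right)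
      have h2 : ((x ⊔ m) ⊓ mᶜ) ⊓ xᶜ ≤ (x ⊔ m) ⊓ xᶜ :=
        le_inf (le_trans inf_le_left inf_le_left) inf_le_right
      rwa [key1 x m h] at h2
    rw [OML.inf_compl] at h1
    exact h1
  rw [hz, sup_bot_eq] at hom
  exact hom

/-- Structure lemma: `pl x y = (xᶜ ⊓ y) ⊔ (x ⊓ (xᶜ ⊔ yᶜ))`. -/
lemma pl_star (x y : α) : pl x y = (xᶜ ⊓ y) ⊔ (x ⊓ (xᶜ ⊔ yᶜ)) := by
  set m := xᶜ ⊓ y with hm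
  set b := xᶜ ⊔ yᶜ with hb
  have hmx : m ≤ xᶜ := inf_le_left
  have hxm : x ≤ mᶜ := le_compl_of hmx
  have hp : pl x y = (x ⊔ m) ⊓ b := rfl
  have hmp : m ≤ (x ⊔ m) ⊓ b := le_inf le_sup_right (le_trans hmx le_sup_left)
  have hom := om hmp
  have hkey : ((x ⊔ m) ⊓ b) ⊓ mᶜ = x ⊓ b := by
    apply le_antisymm
    · refine le_inf ?_ (le_trans inf_le_left inf_le_right)
      have h2 : ((x ⊔ m) ⊓ b) ⊓ mᶜ ≤ (x ⊔ m) ⊓ mᶜ :=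
        le_inf (le_trans inf_le_left inf_le_left) inf_le_right
      rwa [key2 x m hmx] at h2
    · exact le_inf (le_inf (le_trans inf_le_left le_sup_left) inf_le_right)
        (le_trans inf_le_left hxm)
  rw [hkey] at hom
  rw [hp, hom]

/-- `pl x y ⊓ y = xᶜ ⊓ y`. -/
lemma pl_inf (x y : α) : pl x y ⊓ y = xᶜ ⊓ y := by
  set m := xᶜ ⊓ y with hm
  have hmx : m ≤ xᶜ := inf_le_left
  have hmp : m ≤ pl x y := by
    rw [pl_star]; exact le_sup_left
  have hmq : m ≤ pl x y ⊓ y := le_inf hmp inf_le_right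
  have hom := om hmq
  have hpb : pl x y ≤ xᶜ ⊔ yᶜ := by unfold pl; exact inf_le_right
  have hpx : pl x y ⊓ mᶜ ≤ x := by
    rw [pl_star]
    have h3 : ((xᶜ ⊓ y) ⊔ (x ⊓ (xᶜ ⊔ yᶜ))) ⊓ mᶜ ≤ (x ⊔ m) ⊓ mᶜ := by
      refine inf_le_inf_right _ (sup_le ?_ ?_)
      · exact le_sup_right
      · exact le_trans inf_le_left le_sup_left
    rwa [key2 x m hmx] at h3
  have hz : (pl x y ⊓ y) ⊓ mᶜ = ⊥ := by
    apply le_antisymm _ bot_le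
    have h1 : (pl x y ⊓ y) ⊓ mᶜ ≤ (x ⊓ y) ⊓ (x ⊓ y)ᶜ := by
      refine le_inf (le_inf ?_ (le_trans inf_le_left inf_le_right)) ?_
      · exact le_trans (le_inf (le_trans inf_le_left inf_le_left) inf_le_right) hpx
      · rw [compl_inf x y]
        exact le_trans inf_le_left (le_trans inf_le_left hpb)
    rw [OML.inf_compl] at h1
    exact h1
  rw [hz, sup_bot_eq] at hom
  exact hom

/-- `(pl x y)ᶜ = pl xᶜ y`. -/
lemma pl_compl (x y : α) : (pl x y)ᶜ = pl xᶜ y := by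
  have h : pl xᶜ y = (xᶜ ⊔ (x ⊓ y)) ⊓ (x ⊔ yᶜ) := by
    show (xᶜ ⊔ (xᶜᶜ ⊓ y)) ⊓ (xᶜᶜ ⊔ yᶜ) = _
    rw [cc]
  rw [h, pl_star, compl_sup, compl_inf, compl_inf, compl_sup, cc, cc]
  exact inf_comm (x ⊔ yᶜ) (xᶜ ⊔ (x ⊓ y))

end OMLaux

theorem stmt_11 {α : Type*} [OML α] (x y : α) : pl (pl x y) y = x := by
  have hmx : (xᶜ ⊓ y) ≤ xᶜ := inf_le_left
  have hA : pl x y ⊓ y = xᶜ ⊓ y := OMLaux.pl_inf x y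
  have hB : (pl x y)ᶜ ⊓ y = x ⊓ y := by
    rw [OMLaux.pl_compl, OMLaux.pl_inf, OMLaux.cc]
  have hC : (pl x y)ᶜ ⊔ yᶜ = x ⊔ yᶜ := by
    have h := congrArg (·ᶜ) hA
    rw [OMLaux.compl_inf, OMLaux.compl_inf, OMLaux.cc] at h
    exact h
  have hxsplit : x = (x ⊓ y) ⊔ (x ⊓ (xᶜ ⊔ yᶜ)) := by
    have h := OMLaux.om (inf_le_left : x ⊓ y ≤ x)
    rwa [OMLaux.compl_inf] at h
  have hsup : pl x y ⊔ (x ⊓ y) = x ⊔ (xᶜ ⊓ y) := by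
    rw [OMLaux.pl_star, sup_assoc, sup_comm (x ⊓ (xᶜ ⊔ yᶜ)) (x ⊓ y), ← hxsplit]
    exact sup_comm _ _
  show (pl x y ⊔ ((pl x y)ᶜ ⊓ y)) ⊓ ((pl x y)ᶜ ⊔ yᶜ) = x
  rw [hB, hC, hsup]
  have h := OMLaux.key2 x (xᶜ ⊓ y) hmx
  rwa [OMLaux.compl_inf, OMLaux.cc] at h
end
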